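/- For independent Laplace random variables L_i ~ Laplace(0, Δ₁f/ε) added to each coordinate of f(D), the resulting mechanism M(D) = f(D) + (L₁,…,L_d) is ε-differentially private, where Δ₁f = max over neighboring datasets of the ℓ₁ distance ‖f(D) − f(D′)‖₁. -/

import Mathlib

open MeasureTheory Real

/-- `(ε, δ)`-differential privacy of a randomized mechanism `M : D → Measure Ω` with
respect to a neighboring relation on datasets. -/
def IsDP {D Ω : Type*} [MeasurableSpace Ω] (Neighbor : D → D → Prop)
    (M : D → Measure Ω) (ε δ : ℝ) : Prop :=
  ∀ x y, Neighbor x y → ∀ S : Set Ω, MeasurableSet S →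
    M x S ≤ ENNReal.ofReal (Real.exp ε) * M y S + ENNReal.ofReal δ

/-- Density of the centered Laplace distribution with scale `b`. -/
noncomputable def laplacePdf (b x : ℝ) : ℝ := (1 / (2 * b)) * Real.exp (-|x| / b)

/-- Law of a vector of `d` iid centered Laplace random variables with scale `b`. -/
noncomputable def laplaceNoise (d : ℕ) (b : ℝ) : Measure (Fin d → ℝ) :=
  volume.withDensity fun x => ENNReal.ofReal (∏ i, laplacePdf b (x i))

lemma laplacePdf_cont (b : ℝ) : Continuous (laplacePdf b) := by
  unfold laplacePdf; fun_prop

lemma laplace_prod_bound {d : ℕ} (b : ℝ) (hb : 0 < b) (u v z : Fin d → ℝ) :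
    ∏ i, laplacePdf b (z i - u i) ≤
      Real.exp ((∑ i, |u i - v i|) / b) * ∏ i, laplacePdf b (z i - v i) := by
  unfold laplacePdf
  rw [Finset.prod_mul_distrib, Finset.prod_mul_distrib, ← Real.exp_sum, ← Real.exp_sum,
    mul_comm (Real.exp _), mul_assoc, ← Real.exp_add]
  apply mul_le_mul_of_nonneg_left _ (by positivity)
  apply Real.exp_le_exp.2
  rw [Finset.sum_div, ← Finset.sum_add_distrib]
  apply Finset.sum_le_sum
  intro i _
  rw [← add_div, div_le_div_iff_of_pos_right hb]
  have := abs_sub_abs_le_abs_sub (z i - v i) (z i - u i)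
  have h2 : (z i - v i) - (z i - u i) = u i - v i := by ring
  rw [h2] at this
  linarith

lemma laplaceNoise_map_apply {d : ℕ} (b : ℝ) (c : Fin d → ℝ)
    (S : Set (Fin d → ℝ)) (hS : MeasurableSet S) :
    (laplaceNoise d b).map (fun n => c + n) S
      = ∫⁻ z in S, ENNReal.ofReal (∏ i, laplacePdf b (z i - c i)) := by
  unfold laplaceNoise
  rw [Measure.map_apply (measurable_const_add c) hS,
    withDensity_apply _ (hS.preimage (measurable_const_add c))]
  have h := (measurePreserving_add_left volume c).setLIntegral_comp_preimage_emb
    (measurableEmbedding_addLeft c)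
    (fun z => ENNReal.ofReal (∏ i, laplacePdf b (z i - c i))) S
  simp only [add_sub_cancel_left, Pi.add_apply, add_sub_cancel_left] at h
  exact h

/-- The Laplace mechanism `M(D) = f(D) + (L₁, …, L_d)`, with `L_i` iid
`Laplace(0, Δ₁f / ε)` and `Δ₁f` an upper bound on the ℓ₁ distance
`‖f(D) − f(D′)‖₁` over neighboring datasets, is `ε`-differentially private. -/
theorem laplace_mechanism_dp {D : Type*} (Neighbor : D → D → Prop) (d : ℕ)
    (f : D → Fin d → ℝ) (Δ ε : ℝ) (hΔ : 0 < Δ) (hε : 0 < ε)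
    (hsens : ∀ x y, Neighbor x y → ∑ i, |f x i - f y i| ≤ Δ) :
    IsDP Neighbor (fun x => (laplaceNoise d (Δ / ε)).map (fun n => f x + n)) ε 0 := by
  intro x y hxy S hS
  have hb : (0 : ℝ) < Δ / ε := div_pos hΔ hε
  simp only [ENNReal.ofReal_zero, add_zero]
  rw [laplaceNoise_map_apply _ _ _ hS, laplaceNoise_map_apply _ _ _ hS,
    ← lintegral_const_mul' _ _ (by simp)]
  apply setLIntegral_mono' hS
  intro z _
  rw [← ENNReal.ofReal_mul (Real.exp_nonneg _)]
  apply ENNReal.ofReal_le_ofReal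
  calc ∏ i, laplacePdf (Δ / ε) (z i - f x i)
      ≤ Real.exp ((∑ i, |f x i - f y i|) / (Δ / ε)) *
          ∏ i, laplacePdf (Δ / ε) (z i - f y i) := laplace_prod_bound _ hb _ _ _
    _ ≤ Real.exp ε * ∏ i, laplacePdf (Δ / ε) (z i - f y i) := by
        apply mul_le_mul_of_nonneg_right
        · apply Real.exp_le_exp.2
          rw [div_le_iff₀ hb]
          calc ∑ i, |f x i - f y i| ≤ Δ := hsens x y hxy
            _ = ε * (Δ / ε) := by field_simp
        · exact Finset.prod_nonneg fun i _ => by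
            unfold laplacePdf; positivity
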